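/- arXiv:1710.09526 — 2 statements merged into one kernel-verified Lean document; each statement's English description precedes it below -/
import Mathlib

section
/- Let Π be an equitable partition of [n] for G and let C be a cell of Π. Then for every eigenvalue λ of A(G) and every c ∈ C: proj_{V_λ}(R_C) = |C| · proj_{V_λ ∩ U_Π}(e_c). Consequently (1/|C|) · R_C = Σ_{λ ∈ spec A(G)} proj_{V_λ ∩ U_Π}(e_c) for every c ∈ C. -/
/-!
Since `Π` is equitable, `U_Π` is invariant under the symmetric operator `A`, so the orthogonal
projection onto `U_Π` commutes with `A`; it therefore preserves each eigenspace `V_λ`, and hence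
commutes with the projection onto `V_λ`. Thus `proj_{V_λ}` maps `U_Π` into `V_λ ∩ U_Π`, and
`proj_{V_λ} R_C = proj_{V_λ ∩ U_Π} R_C`. On the other hand `e_c - |C|⁻¹ R_C ⊥ U_Π`, so
`proj_{V_λ ∩ U_Π} e_c = |C|⁻¹ proj_{V_λ ∩ U_Π} R_C`. The second claim follows by summing over
the spectrum, since the eigenspaces of `A` decompose `ℝⁿ` orthogonally.
-/

/-- The characteristic vector of a set of vertices, as a vector of Euclidean space `ℝⁿ`. -/
noncomputable def charVec {n : ℕ} (C : Finset (Fin n)) : EuclideanSpace ℝ (Fin n) :=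
  WithLp.toLp 2 (fun v => if v ∈ C then (1 : ℝ) else 0)

/-- The adjacency matrix of `G`, as a linear endomorphism of Euclidean space `ℝⁿ`. -/
noncomputable def adjEnd {n : ℕ} (G : SimpleGraph (Fin n)) [DecidableRel G.Adj] :
    Module.End ℝ (EuclideanSpace ℝ (Fin n)) :=
  Matrix.toEuclideanLin (G.adjMatrix ℝ)

open Finset Module.End Submodule

section Projection

variable {𝕜 E : Type*} [RCLike 𝕜] [NormedAddCommGroup E] [InnerProductSpace 𝕜 E]

theorem Submodule.starProjection_eq_of_sub_mem_orthogonal {K : Submodule 𝕜 E}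
    [K.HasOrthogonalProjection] {x y : E} (h : x - y ∈ Kᗮ) :
    K.starProjection x = K.starProjection y := by
  rwa [← sub_eq_zero, ← map_sub, starProjection_apply_eq_zero_iff]

theorem Submodule.starProjection_eq_of_le_of_mem {W K : Submodule 𝕜 E}
    [W.HasOrthogonalProjection] [K.HasOrthogonalProjection] (hWK : W ≤ K) {x : E}
    (hx : K.starProjection x ∈ W) : W.starProjection x = K.starProjection x :=
  eq_starProjection_of_mem_orthogonal hx
    (orthogonal_le hWK (K.sub_starProjection_mem_orthogonal x))

namespace LinearMap.IsSymmetric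

variable {T : Module.End 𝕜 E} (hT : T.IsSymmetric)
include hT

theorem commute_starProjection_of_mem_invtSubmodule {K : Submodule 𝕜 E}
    [K.HasOrthogonalProjection] (hK : K ∈ T.invtSubmodule) :
    Commute (K.starProjection : Module.End 𝕜 E) T := by
  rw [LinearMap.IsIdempotentElem.commute_iff
    K.isSymmetricProjection_starProjection.isIdempotentElem]
  constructor
  · simpa using hK
  · simpa using hT.orthogonalComplement_mem_invtSubmodule hK

theorem starProjection_eigenspace_mem {U : Submodule 𝕜 E} [U.HasOrthogonalProjection]
    (hU : U ∈ T.invtSubmodule) (μ : 𝕜) [(eigenspace T μ).HasOrthogonalProjection]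
    {x : E} (hx : x ∈ U) : (eigenspace T μ).starProjection x ∈ U := by
  have hUT := hT.commute_starProjection_of_mem_invtSubmodule hU
  have hVU : eigenspace T μ ∈ invtSubmodule (U.starProjection : Module.End 𝕜 E) :=
    fun _ hv => mapsTo_genEigenspace_of_comm hUT.symm μ 1 hv
  have hVU_comm :=
    U.starProjection_isSymmetric.commute_starProjection_of_mem_invtSubmodule hVU
  have := congr($hVU_comm.eq x)
  simp only [Module.End.mul_apply, ContinuousLinearMap.coe_coe] at this
  rw [← starProjection_eq_self_iff.mpr hx, this]
  exact U.starProjection_apply_mem _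

theorem starProjection_eigenspace_inf_eq {U : Submodule 𝕜 E} [U.HasOrthogonalProjection]
    (hU : U ∈ T.invtSubmodule) (μ : 𝕜) [(eigenspace T μ).HasOrthogonalProjection]
    [(eigenspace T μ ⊓ U).HasOrthogonalProjection] {x : E} (hx : x ∈ U) :
    (eigenspace T μ ⊓ U).starProjection x = (eigenspace T μ).starProjection x :=
  starProjection_eq_of_le_of_mem inf_le_left
    (mem_inf.2 ⟨starProjection_apply_mem _ x, hT.starProjection_eigenspace_mem hU μ hx⟩)

theorem sum_starProjection_eigenspace [FiniteDimensional 𝕜 E] {s : Finset 𝕜}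
    (hs : ∀ μ, HasEigenvalue T μ → μ ∈ s) (x : E) :
    ∑ μ ∈ s, (eigenspace T μ).starProjection x = x := by
  have htop : ⨆ μ : s, eigenspace T μ = ⊤ := by
    rw [← orthogonal_eq_bot_iff, eq_bot_iff, ← hT.orthogonalComplement_iSup_eigenspaces_eq_bot]
    refine orthogonal_le (iSup_le fun μ => ?_)
    by_cases hμ : HasEigenvalue T μ
    · exact le_iSup_of_le (⟨μ, hs μ hμ⟩ : s) le_rfl
    · rw [hasEigenvalue_iff, not_not] at hμ
      simp [hμ]
  rw [← Finset.sum_coe_sort]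
  exact (hT.orthogonalFamily_eigenspaces.comp Subtype.coe_injective).sum_projection_of_mem_iSup
    (V := fun μ : s => eigenspace T μ) x (htop ▸ mem_top)

end LinearMap.IsSymmetric

end Projection

variable {n : ℕ}

@[simp]
theorem charVec_apply (C : Finset (Fin n)) (v : Fin n) :
    charVec C v = if v ∈ C then 1 else 0 := rfl

theorem inner_charVec_charVec (C D : Finset (Fin n)) :
    inner ℝ (charVec C) (charVec D) = #(C ∩ D) := by
  simp [PiLp.inner_apply, Finset.sum_ite_mem]

theorem inner_charVec_single (C : Finset (Fin n)) (c : Fin n) :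
    inner ℝ (charVec C) (EuclideanSpace.single c 1) = if c ∈ C then 1 else 0 := by
  simp [EuclideanSpace.inner_single_right]

noncomputable def cellSpace (P : Finpartition (univ : Finset (Fin n))) :
    Submodule ℝ (EuclideanSpace ℝ (Fin n)) :=
  span ℝ (charVec '' (P.parts : Set (Finset (Fin n))))

theorem charVec_mem_cellSpace {P : Finpartition (univ : Finset (Fin n))} {C : Finset (Fin n)}
    (hC : C ∈ P.parts) : charVec C ∈ cellSpace P :=
  subset_span ⟨C, hC, rfl⟩

theorem mem_cellSpace_of_forall_eq {P : Finpartition (univ : Finset (Fin n))}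
    {w : EuclideanSpace ℝ (Fin n)} (hw : ∀ D ∈ P.parts, ∀ x ∈ D, ∀ y ∈ D, w x = w y) :
    w ∈ cellSpace P := by
  obtain ⟨r, -, hr⟩ := P.exists_subset_part_bijOn
  have hpart : ∀ v, P.part v ∈ P.parts := fun v => P.part_mem.2 (mem_univ v)
  have hsum : w = ∑ v ∈ r, w v • charVec (P.part v) := by
    ext u
    obtain ⟨v₀, hv₀, hu⟩ := hr.surjOn (hpart u)
    have hu₀ : u ∈ P.part v₀ := hu ▸ P.mem_part_self.2 (mem_univ u)
    simp only [WithLp.ofLp_sum, WithLp.ofLp_smul, Finset.sum_apply, Pi.smul_apply,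
      charVec_apply, smul_eq_mul, mul_ite, mul_one, mul_zero]
    rw [sum_eq_single_of_mem v₀ hv₀, if_pos hu₀]
    · exact hw _ (hpart v₀) _ hu₀ _ (P.mem_part_self.2 (mem_univ v₀))
    · intro v hv hne
      refine if_neg fun huv => hne (hr.injOn hv hv₀ ?_)
      exact (P.part_eq_of_mem (hpart v) huv).symm.trans hu.symm
  rw [hsum]
  exact sum_mem fun v _ => smul_mem _ _ (charVec_mem_cellSpace (hpart v))

theorem single_sub_inv_card_smul_charVec_mem_orthogonal
    {P : Finpartition (univ : Finset (Fin n))} {C : Finset (Fin n)} (hC : C ∈ P.parts)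
    {c : Fin n} (hc : c ∈ C) :
    EuclideanSpace.single c 1 - (#C : ℝ)⁻¹ • charVec C ∈ (cellSpace P)ᗮ := by
  refine (isOrtho_span.2 ?_).symm (mem_span_singleton_self _)
  rintro _ ⟨D, hD, rfl⟩ _ rfl
  rw [inner_sub_right, inner_smul_right, inner_charVec_single, inner_charVec_charVec]
  obtain rfl | hDC := eq_or_ne D C
  · have : (#D : ℝ) ≠ 0 := by exact_mod_cast (P.nonempty_of_mem_parts hD).card_ne_zero
    simp [hc, this]
  · have hdisj : Disjoint D C := P.disjoint hD hC hDC
    simp [disjoint_left.1 hdisj.symm hc, disjoint_iff_inter_eq_empty.1 hdisj]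

namespace SimpleGraph

def IsEquitablePartition {V : Type*} [Fintype V] [DecidableEq V] (G : SimpleGraph V)
    [DecidableRel G.Adj] (P : Finpartition (univ : Finset V)) : Prop :=
  ∀ D ∈ P.parts, ∀ D' ∈ P.parts, ∀ x ∈ D, ∀ y ∈ D,
    #(D'.filter (G.Adj x)) = #(D'.filter (G.Adj y))

variable (G : SimpleGraph (Fin n)) [DecidableRel G.Adj]

theorem adjEnd_isSymmetric : (adjEnd G).IsSymmetric := by
  rw [adjEnd, Matrix.isSymmetric_toEuclideanLin_iff]
  exact G.isSymm_adjMatrix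

theorem adjEnd_charVec_apply (D : Finset (Fin n)) (v : Fin n) :
    adjEnd G (charVec D) v = #(D.filter (G.Adj v)) := by
  simp only [adjEnd, Matrix.toLpLin_apply, adjMatrix_mulVec_apply, charVec_apply, sum_ite_mem,
    sum_const, nsmul_eq_mul, mul_one, Nat.cast_inj]
  congr 1
  ext
  simp [and_comm]

theorem cellSpace_mem_invtSubmodule_adjEnd {P : Finpartition (univ : Finset (Fin n))}
    (hP : G.IsEquitablePartition P) : cellSpace P ∈ (adjEnd G).invtSubmodule := by
  rw [mem_invtSubmodule, cellSpace, span_le]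
  rintro _ ⟨D, hD, rfl⟩
  refine mem_cellSpace_of_forall_eq fun D' hD' x hx y hy => ?_
  rw [adjEnd_charVec_apply, adjEnd_charVec_apply, hP D' hD' D hD x hx y hy]

end SimpleGraph

/-- For an equitable partition `Π` of `[n]` and a cell `C` of `Π`:
`proj_{V_λ}(R_C) = |C| • proj_{V_λ ∩ U_Π}(e_c)` for every eigenvalue `λ` and every `c ∈ C`,
and consequently `(1/|C|) • R_C = Σ_{λ ∈ spec A(G)} proj_{V_λ ∩ U_Π}(e_c)` for `c ∈ C`. -/
theorem equitable_cell_projection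
    {n : ℕ} (G : SimpleGraph (Fin n)) [DecidableRel G.Adj]
    (P : Finpartition (Finset.univ : Finset (Fin n)))
    (hP : ∀ D ∈ P.parts, ∀ D' ∈ P.parts, ∀ x ∈ D, ∀ y ∈ D,
      (D'.filter (fun d => G.Adj x d)).card = (D'.filter (fun d => G.Adj y d)).card)
    (C : Finset (Fin n)) (hC : C ∈ P.parts)
    (spec : Finset ℝ)
    (hspec : ∀ lam : ℝ, lam ∈ spec ↔ Module.End.HasEigenvalue (adjEnd G) lam) :
    (∀ lam : ℝ, Module.End.HasEigenvalue (adjEnd G) lam → ∀ c ∈ C,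
      ((Submodule.orthogonalProjectionOnto (Module.End.eigenspace (adjEnd G) lam) (charVec C) :
          Module.End.eigenspace (adjEnd G) lam) : EuclideanSpace ℝ (Fin n)) =
        (C.card : ℝ) •
          ((Submodule.orthogonalProjectionOnto
              (Module.End.eigenspace (adjEnd G) lam ⊓
                Submodule.span ℝ (charVec '' (P.parts : Set (Finset (Fin n)))))
              (EuclideanSpace.single c (1 : ℝ)) :
            (Module.End.eigenspace (adjEnd G) lam ⊓
              Submodule.span ℝ (charVec '' (P.parts : Set (Finset (Fin n)))) :
                Submodule ℝ (EuclideanSpace ℝ (Fin n)))) : EuclideanSpace ℝ (Fin n))) ∧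
    (∀ c ∈ C,
      (C.card : ℝ)⁻¹ • charVec C =
        ∑ lam ∈ spec,
          ((Submodule.orthogonalProjectionOnto
              (Module.End.eigenspace (adjEnd G) lam ⊓
                Submodule.span ℝ (charVec '' (P.parts : Set (Finset (Fin n)))))
              (EuclideanSpace.single c (1 : ℝ)) :
            (Module.End.eigenspace (adjEnd G) lam ⊓
              Submodule.span ℝ (charVec '' (P.parts : Set (Finset (Fin n)))) :
                Submodule ℝ (EuclideanSpace ℝ (Fin n)))) : EuclideanSpace ℝ (Fin n))) := by
  have hT := G.adjEnd_isSymmetric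
  have hU := G.cellSpace_mem_invtSubmodule_adjEnd hP
  have hcard : (#C : ℝ) ≠ 0 := by exact_mod_cast (P.nonempty_of_mem_parts hC).card_ne_zero
  have hproj : ∀ lam, ∀ c ∈ C,
      (eigenspace (adjEnd G) lam ⊓ cellSpace P).starProjection (EuclideanSpace.single c 1) =
        (#C : ℝ)⁻¹ • (eigenspace (adjEnd G) lam).starProjection (charVec C) := by
    intro lam c hc
    rw [starProjection_eq_of_sub_mem_orthogonal
        (orthogonal_le inf_le_right (single_sub_inv_card_smul_charVec_mem_orthogonal hC hc)),
      map_smul, hT.starProjection_eigenspace_inf_eq hU lam (charVec_mem_cellSpace hC)]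
  simp only [coe_orthogonalProjectionOnto_apply, ← cellSpace.eq_1]
  refine ⟨fun lam _ c hc => ?_, fun c hc => ?_⟩
  · rw [hproj lam c hc, smul_inv_smul₀ hcard]
  · simp_rw [hproj _ c hc, ← smul_sum, hT.sum_starProjection_eigenspace fun μ => (hspec μ).2]
end

section
/- Let Π be an equitable partition of [n] for G and let C_1, C_2 be two cells of Π, neither of which is a singleton. For an eigenvalue λ of A(G), let Y_{λ,Π} be the orthogonal complement of V_λ ∩ U_Π inside V_λ, and for i = 1,2 let W_i = span{proj_{Y_{λ,Π}}(e_x) : x ∈ C_i}. Then proj_{W_1}(e_u) = proj_{W_1}(e_v) for all u, v ∈ C_2 if and only if W_1 ⊥ W_2. -/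
/-- The column space `U_Π` of the characteristic matrix of the partition `P`. -/
noncomputable def charSpace {n : ℕ} (P : Finpartition (Finset.univ : Finset (Fin n))) :
    Submodule ℝ (EuclideanSpace ℝ (Fin n)) :=
  Submodule.span ℝ (charVec '' (P.parts : Set (Finset (Fin n))))

/-- `Y_{λ,Π}`: the orthogonal complement of `V_λ ∩ U_Π` inside `V_λ`. -/
noncomputable def Ypart {n : ℕ} (G : SimpleGraph (Fin n)) [DecidableRel G.Adj]
    (P : Finpartition (Finset.univ : Finset (Fin n))) (lam : ℝ) :
    Submodule ℝ (EuclideanSpace ℝ (Fin n)) :=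
  Module.End.eigenspace (adjEnd G) lam ⊓
    (Module.End.eigenspace (adjEnd G) lam ⊓ charSpace P)ᗮ

/-- `span{proj_{Y_{λ,Π}}(e_x) : x ∈ C}`. -/
noncomputable def projSpan {n : ℕ} (G : SimpleGraph (Fin n)) [DecidableRel G.Adj]
    (P : Finpartition (Finset.univ : Finset (Fin n))) (lam : ℝ) (C : Finset (Fin n)) :
    Submodule ℝ (EuclideanSpace ℝ (Fin n)) :=
  Submodule.span ℝ
    {v : EuclideanSpace ℝ (Fin n) | ∃ x ∈ C,
      v = ((Submodule.orthogonalProjectionOnto (Ypart G P lam) (EuclideanSpace.single x (1 : ℝ)) :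
        Ypart G P lam) : EuclideanSpace ℝ (Fin n))}

open scoped InnerProductSpace

namespace Finset

theorem forall_eq_iff_forall_eq_zero_of_sum_eq_zero {ι K M : Type*} [DivisionSemiring K]
    [CharZero K] [AddCommMonoid M] [Module K M] {s : Finset ι} {f : ι → M}
    (hsum : ∑ i ∈ s, f i = 0) :
    (∀ i ∈ s, ∀ j ∈ s, f i = f j) ↔ ∀ i ∈ s, f i = 0 := by
  refine ⟨fun h i hi => ?_, fun h i hi j hj => by rw [h i hi, h j hj]⟩
  have : s.card • f i = 0 := by
    rw [← hsum, ← Finset.sum_const, Finset.sum_congr rfl fun j hj => h j hj i hi]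
  rw [← Nat.cast_smul_eq_nsmul K] at this
  exact (smul_eq_zero_iff_right (Nat.cast_ne_zero.mpr (Finset.card_ne_zero_of_mem hi))).mp this

end Finset

namespace Submodule

variable {𝕜 E : Type*} [RCLike 𝕜] [NormedAddCommGroup E] [InnerProductSpace 𝕜 E]

theorem starProjection_mem_orthogonal_iff_of_le {K Y : Submodule 𝕜 E}
    [Y.HasOrthogonalProjection] (h : K ≤ Y) {x : E} :
    Y.starProjection x ∈ Kᗮ ↔ x ∈ Kᗮ := by
  have hx : x - Y.starProjection x ∈ Kᗮ :=
    orthogonal_le h (Y.sub_starProjection_mem_orthogonal x)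
  refine ⟨fun hp => by simpa using add_mem hx hp, fun hx' => by simpa using sub_mem hx' hx⟩

end Submodule

namespace LinearMap.IsSymmetric

variable {𝕜 E : Type*} [RCLike 𝕜] [NormedAddCommGroup E] [InnerProductSpace 𝕜 E]
  {T : Module.End 𝕜 E} (hT : T.IsSymmetric)
include hT

theorem eigenspace_inf_orthogonal_le_orthogonal {U : Submodule 𝕜 E}
    [U.HasOrthogonalProjection] (hU : U ∈ T.invtSubmodule) (μ : 𝕜) :
    Module.End.eigenspace T μ ⊓ (Module.End.eigenspace T μ ⊓ U)ᗮ ≤ Uᗮ := by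
  intro w hw
  obtain ⟨hwμ, hw⟩ := Submodule.mem_inf.mp hw
  set p := U.starProjection w
  set q := w - p
  have hpU : p ∈ U := U.starProjection_apply_mem w
  have hq : q ∈ Uᗮ := U.sub_starProjection_mem_orthogonal w
  have hUperp := hT.orthogonalComplement_mem_invtSubmodule hU
  have hpμ : p ∈ Module.End.eigenspace T μ := by
    rw [Module.End.mem_eigenspace_iff] at hwμ ⊢
    have hsplit : T p - μ • p = -(T q - μ • q) := by
      have : T p + T q = μ • p + μ • q := by
        rw [← map_add, ← smul_add, show p + q = w by simp [q], hwμ]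
      linear_combination (norm := module) this
    have hmem : T p - μ • p ∈ U ⊓ Uᗮ :=
      ⟨sub_mem (hU hpU) (U.smul_mem μ hpU),
        hsplit ▸ neg_mem (sub_mem (hUperp hq) (Uᗮ.smul_mem μ hq))⟩
    rw [U.inf_orthogonal_eq_bot, Submodule.mem_bot, sub_eq_zero] at hmem
    exact hmem
  have hpw : ⟪p, w⟫_𝕜 = 0 := (Submodule.mem_orthogonal _ _).mp hw p ⟨hpμ, hpU⟩
  have hpq : ⟪p, q⟫_𝕜 = 0 := Submodule.inner_right_of_mem_orthogonal hpU hq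
  have hp : p = 0 := by
    rw [← inner_self_eq_zero (𝕜 := 𝕜)]
    simpa [q, inner_sub_right, hpw] using hpq
  exact U.starProjection_apply_eq_zero_iff.mp hp

end LinearMap.IsSymmetric

open Submodule

section Graph

variable {n : ℕ}

theorem charVec_eq_sum_single (C : Finset (Fin n)) :
    charVec C = ∑ u ∈ C, EuclideanSpace.single u (1 : ℝ) := by
  ext x
  simp [charVec, WithLp.ofLp_sum]

theorem mem_charSpace_of_forall_mem_parts_eq {P : Finpartition (Finset.univ : Finset (Fin n))}
    {f : EuclideanSpace ℝ (Fin n)} (hf : ∀ D ∈ P.parts, ∀ x ∈ D, ∀ y ∈ D, f x = f y) :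
    f ∈ charSpace P := by
  classical
  have hf_eq : f = ∑ D ∈ P.parts, (if h : D.Nonempty then f h.choose else 0) • charVec D := by
    ext x
    have hx : P.part x ∈ P.parts := P.part_mem.mpr (Finset.mem_univ x)
    have hxD : x ∈ P.part x := P.mem_part (Finset.mem_univ x)
    rw [WithLp.ofLp_sum, Finset.sum_apply, Finset.sum_eq_single (P.part x)]
    · have hne : (P.part x).Nonempty := ⟨x, hxD⟩
      simp [charVec, hxD, hne, hf _ hx _ hne.choose_spec _ hxD]
    · intro D hD hDx
      have hxD' : x ∉ D := fun h => hDx (P.eq_of_mem_parts hD hx h hxD)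
      split_ifs <;> simp [charVec, hxD']
    · exact fun h => absurd hx h
  rw [hf_eq]
  exact sum_mem fun D hD => smul_mem _ _ (subset_span ⟨D, hD, rfl⟩)

variable (G : SimpleGraph (Fin n)) [DecidableRel G.Adj]

def IsEquitable (P : Finpartition (Finset.univ : Finset (Fin n))) : Prop :=
  ∀ D ∈ P.parts, ∀ D' ∈ P.parts, ∀ x ∈ D, ∀ y ∈ D,
    (D'.filter (fun d => G.Adj x d)).card = (D'.filter (fun d => G.Adj y d)).card

theorem adjEnd_isSymmetric : (adjEnd G).IsSymmetric :=
  Matrix.isSymmetric_toEuclideanLin_iff.mpr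
    (Matrix.isHermitian_iff_isSymm.mpr G.isSymm_adjMatrix)

theorem adjEnd_charVec_apply (D : Finset (Fin n)) (x : Fin n) :
    adjEnd G (charVec D) x = (D.filter (G.Adj x)).card := by
  simp only [adjEnd, charVec, Matrix.toLpLin_apply, SimpleGraph.adjMatrix_mulVec_apply,
    Finset.sum_boole]
  congr 2
  ext
  simp [and_comm]

variable {G} {P : Finpartition (Finset.univ : Finset (Fin n))}

theorem charSpace_mem_invtSubmodule
    (hP : IsEquitable G P) :
    charSpace P ∈ (adjEnd G).invtSubmodule := by
  refine (Module.End.mem_invtSubmodule _).mpr (span_le.mpr ?_)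
  rintro _ ⟨D, hD, rfl⟩
  refine mem_charSpace_of_forall_mem_parts_eq fun D' hD' x hx y hy => ?_
  rw [adjEnd_charVec_apply, adjEnd_charVec_apply, hP D' hD' D hD x hx y hy]

theorem Ypart_le_orthogonal_charSpace
    (hP : IsEquitable G P)
    (lam : ℝ) : Ypart G P lam ≤ (charSpace P)ᗮ :=
  (adjEnd_isSymmetric G).eigenspace_inf_orthogonal_le_orthogonal
    (charSpace_mem_invtSubmodule hP) lam

theorem projSpan_le_Ypart (lam : ℝ) (C : Finset (Fin n)) :
    projSpan G P lam C ≤ Ypart G P lam :=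
  span_le.mpr fun _ ⟨_, _, hv⟩ => hv ▸ coe_mem _

theorem projSpan_le_orthogonal_iff {lam : ℝ} {K : Submodule ℝ (EuclideanSpace ℝ (Fin n))}
    (hK : K ≤ Ypart G P lam) (C : Finset (Fin n)) :
    projSpan G P lam C ≤ Kᗮ ↔ ∀ x ∈ C, EuclideanSpace.single x (1 : ℝ) ∈ Kᗮ := by
  simp only [projSpan, span_le, Set.subset_def, Set.mem_ofPred_eq, forall_exists_index, and_imp]
  refine ⟨fun h x hx => ?_, fun h v x hx hv => ?_⟩
  · exact (starProjection_mem_orthogonal_iff_of_le hK).mp (h _ x hx rfl)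
  · exact hv ▸ (starProjection_mem_orthogonal_iff_of_le hK).mpr (h x hx)

theorem sum_orthogonalProjectionOnto_single_eq_zero
    (hP : IsEquitable G P)
    {lam : ℝ} {K : Submodule ℝ (EuclideanSpace ℝ (Fin n))} (hK : K ≤ Ypart G P lam)
    {C : Finset (Fin n)} (hC : C ∈ P.parts) :
    ∑ u ∈ C, K.orthogonalProjectionOnto (EuclideanSpace.single u (1 : ℝ)) = 0 := by
  rw [← map_sum, ← charVec_eq_sum_single, orthogonalProjectionOnto_eq_zero_iff]
  refine orthogonal_le (hK.trans (Ypart_le_orthogonal_charSpace hP lam)) ?_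
  exact le_orthogonal_orthogonal _ (subset_span ⟨C, hC, rfl⟩)

end Graph

theorem separating_pseudo_orbits_general
    {n : ℕ} (G : SimpleGraph (Fin n)) [DecidableRel G.Adj]
    (P : Finpartition (Finset.univ : Finset (Fin n)))
    (hP : ∀ D ∈ P.parts, ∀ D' ∈ P.parts, ∀ x ∈ D, ∀ y ∈ D,
      (D'.filter (fun d => G.Adj x d)).card = (D'.filter (fun d => G.Adj y d)).card)
    (C₁ C₂ : Finset (Fin n)) (hC₂ : C₂ ∈ P.parts)
    (lam : ℝ) :
    (∀ u ∈ C₂, ∀ v ∈ C₂,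
      (Submodule.orthogonalProjectionOnto (projSpan G P lam C₁) (EuclideanSpace.single u (1 : ℝ)) :
        projSpan G P lam C₁) =
      (Submodule.orthogonalProjectionOnto (projSpan G P lam C₁) (EuclideanSpace.single v (1 : ℝ)) :
        projSpan G P lam C₁)) ↔
    projSpan G P lam C₁ ≤ (projSpan G P lam C₂)ᗮ := by
  have hW₁ := projSpan_le_Ypart (G := G) (P := P) lam C₁
  rw [Finset.forall_eq_iff_forall_eq_zero_of_sum_eq_zero (K := ℝ)
      (sum_orthogonalProjectionOnto_single_eq_zero hP hW₁ hC₂),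
    ← isOrtho_iff_le, isOrtho_comm, isOrtho_iff_le, projSpan_le_orthogonal_iff hW₁]
  simp only [orthogonalProjectionOnto_eq_zero_iff]

/-- Lemma (separating pseudo-orbits): let `Π` be an equitable partition for `G`, let
`C₁, C₂` be two non-singleton cells of `Π`, and `λ` an eigenvalue of `A(G)`. With
`W_i = span{proj_{Y_{λ,Π}}(e_x) : x ∈ C_i}`, the projections of `e_u` (`u ∈ C₂`) onto
`W₁` all coincide if and only if `W₁ ⊥ W₂`. -/
theorem separating_pseudo_orbits
    {n : ℕ} (G : SimpleGraph (Fin n)) [DecidableRel G.Adj]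
    (P : Finpartition (Finset.univ : Finset (Fin n)))
    (hP : ∀ D ∈ P.parts, ∀ D' ∈ P.parts, ∀ x ∈ D, ∀ y ∈ D,
      (D'.filter (fun d => G.Adj x d)).card = (D'.filter (fun d => G.Adj y d)).card)
    (C₁ C₂ : Finset (Fin n)) (hC₁ : C₁ ∈ P.parts) (hC₂ : C₂ ∈ P.parts)
    (hC₁card : 1 < C₁.card) (hC₂card : 1 < C₂.card)
    (lam : ℝ) (hlam : Module.End.HasEigenvalue (adjEnd G) lam) :
    (∀ u ∈ C₂, ∀ v ∈ C₂,
      (Submodule.orthogonalProjectionOnto (projSpan G P lam C₁) (EuclideanSpace.single u (1 : ℝ)) :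
        projSpan G P lam C₁) =
      (Submodule.orthogonalProjectionOnto (projSpan G P lam C₁) (EuclideanSpace.single v (1 : ℝ)) :
        projSpan G P lam C₁)) ↔
    projSpan G P lam C₁ ≤ (projSpan G P lam C₂)ᗮ :=
  separating_pseudo_orbits_general G P hP C₁ C₂ hC₂ lam
end
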